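/- There is a constant C depending only on g and k with the following property. Let H be a k-local Hamiltonian with interaction strength g on the N-spin system, with ground energy 0, unique normalized ground state |Ω⟩, and spectral gap δE > 0. Then for every subset of spins L with δE ≤ g|L|, every additive operator A_L on L, and every median m of A_L in the state |Ω⟩, the mean and the median satisfy |⟨Ω|A_L|Ω⟩ − m| ≤ C·√(|L|/δE). -/

import Mathlib

noncomputable section

open scoped ComplexConjugate

/-- The Hilbert space of `N` spins, each of local dimension `d`:
the `N`-fold tensor product `⊗ ℂ^d`, realized as the space with orthonormal
basis indexed by configurations `Fin N → Fin d`. -/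
abbrev SpinSpace (N d : ℕ) : Type := EuclideanSpace ℂ (Fin N → Fin d)

/-- Operators on the spin system. -/
abbrev SpinOp (N d : ℕ) : Type := SpinSpace N d →L[ℂ] SpinSpace N d

variable {N d : ℕ}

/-- The standard (computational) basis vector labelled by a configuration. -/
def basisVec (f : Fin N → Fin d) : SpinSpace N d := EuclideanSpace.single f 1

/-- The matrix entry `⟨f| A |g⟩` of an operator in the computational basis. -/
def matEntry (A : SpinOp N d) (f g : Fin N → Fin d) : ℂ :=
  inner ℂ (basisVec f) (A (basisVec g))

/-- `A` is supported on the subset `X` of spins: under the tensor factorization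
`ℋ ≅ ℋ_X ⊗ ℋ_{Xᶜ}` it has the form `o ⊗ I`.  Concretely: matrix entries vanish
unless the two configurations agree outside `X`, and entries depend only on the
restrictions of the configurations to `X`. -/
def SupportedOn (X : Finset (Fin N)) (A : SpinOp N d) : Prop :=
  (∀ f g : Fin N → Fin d, (∃ i, i ∉ X ∧ f i ≠ g i) → matEntry A f g = 0) ∧
  (∀ f g f' g' : Fin N → Fin d,
      (∀ i ∈ X, f i = f' i) → (∀ i ∈ X, g i = g' i) →
      (∀ i, i ∉ X → f i = g i) → (∀ i, i ∉ X → f' i = g' i) →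
      matEntry A f g = matEntry A f' g')

/-- A `q`-local operator: a sum of operators, each supported on at most `q` spins. -/
def IsLocalOp (q : ℕ) (A : SpinOp N d) : Prop :=
  ∃ (n : ℕ) (X : Fin n → Finset (Fin N)) (o : Fin n → SpinOp N d),
    (∀ t, (X t).card ≤ q ∧ SupportedOn (X t) (o t)) ∧ A = ∑ t, o t

/-- A `k`-local Hamiltonian with interaction strength `g`: a sum of Hermitian
terms, each supported on at most `k` spins, such that for every spin the total
norm of the terms acting on it is at most `g`. -/
def IsKLocalHamiltonian (k : ℕ) (g : ℝ) (H : SpinOp N d) : Prop :=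
  ∃ (n : ℕ) (X : Fin n → Finset (Fin N)) (h : Fin n → SpinOp N d),
    (∀ t, (X t).card ≤ k ∧ SupportedOn (X t) (h t) ∧ IsSelfAdjoint (h t)) ∧
    (∀ i : Fin N, ∑ t ∈ Finset.univ.filter (fun t => i ∈ X t), ‖h t‖ ≤ g) ∧
    H = ∑ t, h t

/-- An additive operator `A = ∑_{i ∈ L} a_i`, each `a_i` Hermitian, supported on
the single spin `i`, with `‖a_i‖ ≤ 1`. -/
def IsAdditiveOn (L : Finset (Fin N)) (a : Fin N → SpinOp N d) (A : SpinOp N d) : Prop :=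
  (∀ i ∈ L, SupportedOn {i} (a i) ∧ IsSelfAdjoint (a i) ∧ ‖a i‖ ≤ 1) ∧
  A = ∑ i ∈ L, a i

/-- The span of all eigenvectors of `A` whose (real) eigenvalue satisfies `P`. -/
def eigSpan (A : SpinOp N d) (P : ℝ → Prop) : Submodule ℂ (SpinSpace N d) :=
  ⨆ (a : ℝ) (_ : P a), Module.End.eigenspace (A : SpinSpace N d →ₗ[ℂ] SpinSpace N d) (a : ℂ)

/-- Spectral projector of `A` onto the eigenvalues satisfying `P` (the orthogonal
projection onto the span of the corresponding eigenvectors). -/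
def specProj (A : SpinOp N d) (P : ℝ → Prop) : SpinOp N d :=
  (eigSpan A P).subtypeL.comp ((eigSpan A P).orthogonalProjectionOnto)

/-- `m` is a median of `A` in the state `ψ`. -/
def IsMedian (A : SpinOp N d) (ψ : SpinSpace N d) (m : ℝ) : Prop :=
  (1:ℝ)/2 ≤ (inner ℂ ψ ((specProj A (fun a => a ≤ m)) ψ) : ℂ).re ∧
  (1:ℝ)/2 ≤ (inner ℂ ψ ((specProj A (fun a => m ≤ a)) ψ) : ℂ).re

/-- The state `ψ` satisfies the local-reversibility bound with function `f`. -/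
def SatisfiesLR (f : ℝ → ℝ) (ψ : SpinSpace N d) : Prop :=
  ∀ (L : Finset (Fin N)) (Γ : SpinOp N d), SupportedOn L Γ →
    (inner ℂ ψ (Γ ψ) : ℂ) ≠ 0 →
    ∀ q : ℕ, 0 < q →
      ∃ R : SpinOp N d, IsLocalOp q R ∧
        ‖R (Γ ψ) - ψ‖ ≤ ‖Γ‖ / ‖(inner ℂ ψ (Γ ψ))‖ * f ((q : ℝ) / Real.sqrt (L.card))

/-- `H` has ground energy `0` with unique normalized ground state `Ω` and spectral
gap (at least) `δE`: `Ω` is a null state, every null state is proportional to `Ω`,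
and on the orthogonal complement of `Ω` the energy is at least `δE`. -/
def IsGappedGround (H : SpinOp N d) (Ω : SpinSpace N d) (δE : ℝ) : Prop :=
  ‖Ω‖ = 1 ∧ H Ω = 0 ∧
  (∀ φ : SpinSpace N d, H φ = 0 → ∃ c : ℂ, φ = c • Ω) ∧
  (∀ φ : SpinSpace N d, (inner ℂ Ω φ : ℂ) = 0 → δE * ‖φ‖ ^ 2 ≤ (inner ℂ φ (H φ) : ℂ).re)

/-!
Let `c = ⟨Ω, A Ω⟩` and `φ = A Ω - c Ω`, which is orthogonal to `Ω`. The gap gives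
`δE ‖φ‖² ≤ ⟨φ, H φ⟩ = ⟨A Ω, H A Ω⟩ = -½ ⟨Ω, [A, [A, H]] Ω⟩`, and since single-site terms commute
with every term of `H` not acting on their site, `‖[A, [A, H]]‖ ≤ 4 k g |L|`. Hence the variance
`‖φ‖²` is at most `2 k g |L| / δE`, and by Chebyshev's inequality for the spectral measure of `A`
a median lies within `√2` standard deviations of the mean.
-/

open Finset

section Commutator

variable {R ι : Type*}

theorem Ring.lie_sum [Ring R] (s : Finset ι) (a : ι → R) (x : R) :
    ⁅x, ∑ i ∈ s, a i⁆ = ∑ i ∈ s, ⁅x, a i⁆ := by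
  simp only [Ring.lie_def, mul_sum, sum_mul, sum_sub_distrib]

theorem Ring.sum_lie_eq_sum_inter_of_commute [Ring R] [DecidableEq ι] (s t : Finset ι)
    (a : ι → R) (x : R) (hax : ∀ i ∈ s, i ∉ t → Commute (a i) x) :
    ⁅∑ i ∈ s, a i, x⁆ = ∑ i ∈ s ∩ t, ⁅a i, x⁆ := by
  simp_rw [Ring.lie_def, sum_mul, mul_sum, ← sum_sub_distrib]
  rw [← sum_ite_mem]
  refine sum_congr rfl fun i hi => ?_
  split_ifs with hit
  · rfl
  · exact commute_iff_lie_eq.mp (hax i hi hit)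

variable [NormedRing R]

theorem norm_lie_le (x y : R) : ‖⁅x, y⁆‖ ≤ 2 * ‖x‖ * ‖y‖ := by
  rw [Ring.lie_def]
  calc ‖x * y - y * x‖ ≤ ‖x‖ * ‖y‖ + ‖y‖ * ‖x‖ :=
        (norm_sub_le _ _).trans (add_le_add (norm_mul_le _ _) (norm_mul_le _ _))
    _ = 2 * ‖x‖ * ‖y‖ := by ring

theorem norm_sum_lie_le (s : Finset ι) (a : ι → R) (x : R) (ha : ∀ i ∈ s, ‖a i‖ ≤ 1) :
    ‖∑ i ∈ s, ⁅a i, x⁆‖ ≤ 2 * #s * ‖x‖ := by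
  calc ‖∑ i ∈ s, ⁅a i, x⁆‖ ≤ ∑ i ∈ s, ‖⁅a i, x⁆‖ := norm_sum_le _ _
    _ ≤ ∑ _i ∈ s, 2 * ‖x‖ := sum_le_sum fun i hi => (norm_lie_le _ _).trans <| by
        have := ha i hi
        nlinarith [norm_nonneg x]
    _ = 2 * #s * ‖x‖ := by rw [sum_const, nsmul_eq_mul]; ring

/-- Only the `#(s ∩ t)` summands that fail to commute with `x` contribute, on both levels of the
double commutator. -/
theorem norm_lie_sum_lie_sum_le [DecidableEq ι] {s t : Finset ι} {a : ι → R} {x : R}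
    (ha : ∀ i ∈ s, ‖a i‖ ≤ 1) (hax : ∀ i ∈ s, i ∉ t → Commute (a i) x)
    (haa : ∀ i ∈ s, ∀ j ∈ s, i ≠ j → Commute (a i) (a j)) :
    ‖⁅∑ i ∈ s, a i, ⁅∑ i ∈ s, a i, x⁆⁆‖ ≤ 4 * #(s ∩ t) ^ 2 * ‖x‖ := by
  have hst : ∀ i ∈ s ∩ t, ‖a i‖ ≤ 1 := fun i hi => ha i (mem_inter.mp hi).1
  have hinner := Ring.sum_lie_eq_sum_inter_of_commute s t a x hax
  have hcomm : ∀ j ∈ s, j ∉ t → Commute (a j) ⁅∑ i ∈ s, a i, x⁆ := by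
    intro j hj hjt
    rw [hinner]
    refine Commute.sum_right _ _ _ fun i hi => ?_
    obtain ⟨his, hit⟩ := mem_inter.mp hi
    have hji := haa j hj i his (ne_of_mem_of_not_mem hit hjt).symm
    rw [Ring.lie_def]
    exact (hji.mul_right (hax j hj hjt)).sub_right ((hax j hj hjt).mul_right hji)
  rw [Ring.sum_lie_eq_sum_inter_of_commute s t a _ hcomm]
  calc _ ≤ 2 * #(s ∩ t) * ‖⁅∑ i ∈ s, a i, x⁆‖ := norm_sum_lie_le _ _ _ hst
    _ ≤ 2 * #(s ∩ t) * (2 * #(s ∩ t) * ‖x‖) := by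
        rw [hinner]; gcongr; exact norm_sum_lie_le _ _ _ hst
    _ = 4 * #(s ∩ t) ^ 2 * ‖x‖ := by ring

end Commutator

theorem Finset.sum_card_inter_nsmul {α ι M : Type*} [DecidableEq α] [Fintype ι] [AddCommMonoid M]
    (s : Finset α) (X : ι → Finset α) (w : ι → M) :
    ∑ t, #(s ∩ X t) • w t = ∑ i ∈ s, ∑ t with i ∈ X t, w t := by
  simp_rw [← sum_const, ← sum_ite_mem, sum_filter]
  exact sum_comm

section Locality

variable {N d : ℕ}

theorem matEntry_eq_apply (A : SpinOp N d) (f g : Fin N → Fin d) :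
    matEntry A f g = A (basisVec g) f := by
  simp [matEntry, basisVec, EuclideanSpace.inner_single_left]

theorem spinOp_ext_matEntry {A B : SpinOp N d} (h : ∀ f g, matEntry A f g = matEntry B f g) :
    A = B := by
  refine ContinuousLinearMap.coe_injective <|
    (EuclideanSpace.basisFun (Fin N → Fin d) ℂ).toBasis.ext fun g => ?_
  ext f
  simpa [matEntry_eq_apply, basisVec] using h f g

theorem apply_basisVec_eq_sum (A : SpinOp N d) (g : Fin N → Fin d) :
    A (basisVec g) = ∑ h, matEntry A h g • basisVec h := by
  simpa [matEntry, basisVec] using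
    ((EuclideanSpace.basisFun (Fin N → Fin d) ℂ).sum_repr' (A (basisVec g))).symm

theorem matEntry_mul (A B : SpinOp N d) (f g : Fin N → Fin d) :
    matEntry (A * B) f g = ∑ h, matEntry A f h * matEntry B h g := by
  rw [matEntry, mul_apply_eq_comp, apply_basisVec_eq_sum B g, map_sum, inner_sum]
  simp [matEntry, inner_smul_right, mul_comm]

variable {X Y : Finset (Fin N)} {A B : SpinOp N d}

theorem SupportedOn.matEntry_mul_eq (hA : SupportedOn X A) (hB : SupportedOn Y B)
    (hXY : Disjoint X Y) (f g : Fin N → Fin d) :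
    matEntry (A * B) f g = matEntry A f (X.piecewise g f) * matEntry B (X.piecewise g f) g := by
  rw [matEntry_mul, Finset.sum_eq_single (X.piecewise g f) _ (by simp)]
  intro h _ hne
  obtain ⟨i, hi⟩ := Function.ne_iff.mp hne
  by_cases hiX : i ∈ X
  · rw [X.piecewise_eq_of_mem _ _ hiX] at hi
    rw [hB.1 h g ⟨i, Finset.disjoint_left.mp hXY hiX, hi⟩, mul_zero]
  · rw [X.piecewise_eq_of_notMem _ _ hiX] at hi
    rw [hA.1 f h ⟨i, hiX, Ne.symm hi⟩, zero_mul]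

theorem SupportedOn.commute (hA : SupportedOn X A) (hB : SupportedOn Y B) (hXY : Disjoint X Y) :
    Commute A B := by
  refine spinOp_ext_matEntry fun f g => ?_
  rw [hA.matEntry_mul_eq hB hXY, hB.matEntry_mul_eq hA hXY.symm]
  have hX : ∀ i ∈ X, i ∉ Y := fun _ => (Finset.disjoint_left.mp hXY ·)
  have hY : ∀ i ∈ Y, i ∉ X := fun _ => (Finset.disjoint_right.mp hXY ·)
  by_cases hfg : ∀ i ∉ X, i ∉ Y → f i = g i
  · have hAe : matEntry A f (X.piecewise g f) = matEntry A (Y.piecewise g f) g := by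
      apply hA.2 <;> intro i hi
      · simp [hX i hi]
      · simp [hi]
      · simp [hi]
      · by_cases hiY : i ∈ Y
        · simp [hiY]
        · simp [hiY, hfg i hi hiY]
    have hBe : matEntry B (X.piecewise g f) g = matEntry B f (Y.piecewise g f) := by
      apply hB.2 <;> intro i hi
      · simp [hY i hi]
      · simp [hi]
      · by_cases hiX : i ∈ X
        · simp [hiX]
        · simp [hiX, hfg i hiX hi]
      · simp [hi]
    rw [hAe, hBe, mul_comm]
  · push Not at hfg
    obtain ⟨i, hiX, hiY, hne⟩ := hfg
    rw [hB.1 _ g ⟨i, hiY, by simpa [hiX]⟩, hA.1 _ g ⟨i, hiX, by simpa [hiY]⟩, mul_zero, mul_zero]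

end Locality

section Hamiltonian

variable {N d k : ℕ} {g : ℝ} {H A : SpinOp N d} {L : Finset (Fin N)} {a : Fin N → SpinOp N d}

theorem IsAdditiveOn.isSelfAdjoint (hA : IsAdditiveOn L a A) : IsSelfAdjoint A := by
  obtain ⟨ha, rfl⟩ := hA
  exact isSelfAdjoint_sum (R := SpinOp N d) L fun i hi => (ha i hi).2.1

theorem IsKLocalHamiltonian.isSelfAdjoint (hH : IsKLocalHamiltonian k g H) : IsSelfAdjoint H := by
  obtain ⟨n, X, h, hloc, -, rfl⟩ := hH
  exact isSelfAdjoint_sum (R := SpinOp N d) _ fun t _ => (hloc t).2.2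

/-- Each term `h_t` only sees the `#(L ∩ X_t) ≤ k` spins of `L` it acts on; summing
`#(L ∩ X_t) ‖h_t‖` over `t` counts every spin of `L` with weight at most `g`. -/
theorem IsKLocalHamiltonian.norm_lie_lie_le (hH : IsKLocalHamiltonian k g H)
    (hA : IsAdditiveOn L a A) : ‖⁅A, ⁅A, H⁆⁆‖ ≤ 4 * k * g * #L := by
  obtain ⟨n, X, h, hloc, hstrength, rfl⟩ := hH
  obtain ⟨ha, rfl⟩ := hA
  have hterm : ∀ t, ‖⁅∑ i ∈ L, a i, ⁅∑ i ∈ L, a i, h t⁆⁆‖ ≤ 4 * k * (#(L ∩ X t) * ‖h t‖) := by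
    intro t
    have hcard : (#(L ∩ X t) : ℝ) ≤ k := by
      exact_mod_cast (card_le_card inter_subset_right).trans (hloc t).1
    refine (norm_lie_sum_lie_sum_le (fun i hi => (ha i hi).2.2)
      (fun i hi hit => (ha i hi).1.commute (hloc t).2.1 (disjoint_singleton_left.mpr hit))
      (fun i hi j hj hij => (ha i hi).1.commute (ha j hj).1 (disjoint_singleton.mpr hij))).trans ?_
    calc 4 * (#(L ∩ X t) : ℝ) ^ 2 * ‖h t‖ = 4 * #(L ∩ X t) * (#(L ∩ X t) * ‖h t‖) := by ring
      _ ≤ 4 * k * (#(L ∩ X t) * ‖h t‖) := by gcongr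
  calc ‖⁅∑ i ∈ L, a i, ⁅∑ i ∈ L, a i, ∑ t, h t⁆⁆‖
      = ‖∑ t, ⁅∑ i ∈ L, a i, ⁅∑ i ∈ L, a i, h t⁆⁆‖ := by
        rw [Ring.lie_sum, Ring.lie_sum]
    _ ≤ ∑ t, 4 * k * (#(L ∩ X t) * ‖h t‖) := (norm_sum_le _ _).trans (sum_le_sum fun t _ => hterm t)
    _ = 4 * k * ∑ i ∈ L, ∑ t with i ∈ X t, ‖h t‖ := by
        simp_rw [← mul_sum, ← nsmul_eq_mul, sum_card_inter_nsmul]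
    _ ≤ 4 * k * ∑ _i ∈ L, g := by gcongr with i; exact hstrength i
    _ = 4 * k * g * #L := by rw [sum_const, nsmul_eq_mul]; ring

end Hamiltonian

open scoped InnerProductSpace

section EnergyIdentity

variable {𝕜 E : Type*} [RCLike 𝕜] [NormedAddCommGroup E] [InnerProductSpace 𝕜 E] [CompleteSpace E]

theorem IsSelfAdjoint.inner_apply_eq_zero_of_apply_eq_zero {H : E →L[𝕜] E} {Ω : E}
    (hH : IsSelfAdjoint H) (hΩ : H Ω = 0) (v : E) : ⟪Ω, H v⟫_𝕜 = 0 :=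
  (hH.isSymmetric _ _).symm.trans (by simp [hΩ])

theorem inner_lie_lie_apply_of_apply_eq_zero {A H : E →L[𝕜] E} {Ω : E} (hA : IsSelfAdjoint A)
    (hH : IsSelfAdjoint H) (hΩ : H Ω = 0) :
    ⟪Ω, ⁅A, ⁅A, H⁆⁆ Ω⟫_𝕜 = -2 * ⟪A Ω, H (A Ω)⟫_𝕜 := by
  have hAHA : ⟪Ω, A (H (A Ω))⟫_𝕜 = ⟪A Ω, H (A Ω)⟫_𝕜 := (hA.isSymmetric _ _).symm
  simp only [Ring.lie_def, sub_apply, mul_apply_eq_comp, hΩ, map_zero, zero_sub, map_neg,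
    inner_sub_right, inner_neg_right, hAHA, hH.inner_apply_eq_zero_of_apply_eq_zero hΩ]
  ring

end EnergyIdentity

section Spectral

variable {𝕜 E : Type*} [RCLike 𝕜] [NormedAddCommGroup E] [InnerProductSpace 𝕜 E]
  [FiniteDimensional 𝕜 E]

theorem LinearMap.IsSymmetric.norm_sub_smul_sq_eq_sum {T : E →ₗ[𝕜] E} (hT : T.IsSymmetric)
    {n : ℕ} (hn : Module.finrank 𝕜 E = n) (c : ℝ) (v : E) :
    ‖T v - (c : 𝕜) • v‖ ^ 2 =
      ∑ i, (hT.eigenvalues hn i - c) ^ 2 * ‖⟪hT.eigenvectorBasis hn i, v⟫_𝕜‖ ^ 2 := by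
  rw [← (hT.eigenvectorBasis hn).sum_sq_norm_inner_right]
  refine sum_congr rfl fun i _ => ?_
  rw [← OrthonormalBasis.repr_apply_apply, ← OrthonormalBasis.repr_apply_apply, map_sub, map_smul,
    PiLp.sub_apply, PiLp.smul_apply, hT.eigenvectorBasis_apply_self_apply, smul_eq_mul, ← sub_mul,
    norm_mul, mul_pow, ← RCLike.ofReal_sub, RCLike.norm_ofReal, sq_abs]

end Spectral

section SpectralProjector

variable {N d n : ℕ} {A : SpinOp N d}

theorem inner_eigenvectorBasis_specProj (hA : (A : SpinSpace N d →ₗ[ℂ] SpinSpace N d).IsSymmetric)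
    (hn : Module.finrank ℂ (SpinSpace N d) = n) (P : ℝ → Prop) [DecidablePred P]
    (ψ : SpinSpace N d) (i : Fin n) :
    ⟪hA.eigenvectorBasis hn i, specProj A P ψ⟫_ℂ =
      if P (hA.eigenvalues hn i) then ⟪hA.eigenvectorBasis hn i, ψ⟫_ℂ else 0 := by
  have hproj : specProj A P ψ = (eigSpan A P).starProjection ψ := rfl
  have hvec := (hA.hasEigenvector_eigenvectorBasis hn i).1
  split_ifs with hP
  · have hmem : hA.eigenvectorBasis hn i ∈ eigSpan A P :=
      le_iSup₂ (f := fun a (_ : P a) => Module.End.eigenspace (A : SpinSpace N d →ₗ[ℂ] _) (a : ℂ))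
        _ hP hvec
    rw [hproj, ← Submodule.inner_starProjection_left_eq_right,
      Submodule.starProjection_eq_self_iff.mpr hmem]
  · have hperp : eigSpan A P ≤ (ℂ ∙ hA.eigenvectorBasis hn i)ᗮ := by
      refine iSup₂_le fun a ha v hv => Submodule.mem_orthogonal_singleton_iff_inner_right.mpr ?_
      have hne : (hA.eigenvalues hn i : ℂ) ≠ a := fun h => hP (Complex.ofReal_injective h ▸ ha)
      exact hA.orthogonalFamily_eigenspaces hne ⟨_, hvec⟩ ⟨v, hv⟩
    rw [← Submodule.mem_orthogonal_singleton_iff_inner_right, hproj]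
    exact hperp (Submodule.coe_mem _)

theorem norm_specProj_sq (hA : (A : SpinSpace N d →ₗ[ℂ] SpinSpace N d).IsSymmetric)
    (hn : Module.finrank ℂ (SpinSpace N d) = n) (P : ℝ → Prop) [DecidablePred P]
    (ψ : SpinSpace N d) :
    ‖specProj A P ψ‖ ^ 2 =
      ∑ i with P (hA.eigenvalues hn i), ‖⟪hA.eigenvectorBasis hn i, ψ⟫_ℂ‖ ^ 2 := by
  rw [← (hA.eigenvectorBasis hn).sum_sq_norm_inner_right, sum_filter]
  refine sum_congr rfl fun i _ => ?_
  rw [inner_eigenvectorBasis_specProj hA hn]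
  split_ifs <;> simp

theorem re_inner_specProj_self (P : ℝ → Prop) (ψ : SpinSpace N d) :
    (⟪ψ, specProj A P ψ⟫_ℂ).re = ‖specProj A P ψ‖ ^ 2 := by
  rw [← inner_conj_symm, Complex.conj_re]
  exact (eigSpan A P).re_inner_starProjection_eq_normSq ψ

/-- Chebyshev's inequality for the spectral measure of `A` in the state `ψ`. -/
theorem mul_re_inner_specProj_le (hA : IsSelfAdjoint A) {P : ℝ → Prop} {c r : ℝ}
    (hP : ∀ x, P x → r ≤ (x - c) ^ 2) (ψ : SpinSpace N d) :
    r * (⟪ψ, specProj A P ψ⟫_ℂ).re ≤ ‖A ψ - (c : ℂ) • ψ‖ ^ 2 := by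
  classical
  have hT := hA.isSymmetric
  rw [re_inner_specProj_self, norm_specProj_sq hT rfl, mul_sum]
  calc ∑ i with P (hT.eigenvalues rfl i), r * ‖⟪hT.eigenvectorBasis rfl i, ψ⟫_ℂ‖ ^ 2
      ≤ ∑ i with P (hT.eigenvalues rfl i),
          (hT.eigenvalues rfl i - c) ^ 2 * ‖⟪hT.eigenvectorBasis rfl i, ψ⟫_ℂ‖ ^ 2 :=
        sum_le_sum fun i hi => by gcongr; exact hP _ (mem_filter.mp hi).2
    _ ≤ ∑ i, (hT.eigenvalues rfl i - c) ^ 2 * ‖⟪hT.eigenvectorBasis rfl i, ψ⟫_ℂ‖ ^ 2 :=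
        sum_le_sum_of_subset_of_nonneg (filter_subset _ _) fun _ _ _ => by positivity
    _ = ‖A ψ - (c : ℂ) • ψ‖ ^ 2 := (hT.norm_sub_smul_sq_eq_sum rfl c ψ).symm

theorem IsMedian.sq_sub_le (hA : IsSelfAdjoint A) {ψ : SpinSpace N d} {m : ℝ}
    (hm : IsMedian A ψ m) (c : ℝ) : (m - c) ^ 2 ≤ 2 * ‖A ψ - (c : ℂ) • ψ‖ ^ 2 := by
  rcases le_total c m with hcm | hmc
  · have := mul_re_inner_specProj_le hA (P := (m ≤ ·)) (c := c) (r := (m - c) ^ 2)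
      (fun x hx => by nlinarith) ψ
    nlinarith [hm.2, sq_nonneg (m - c)]
  · have := mul_re_inner_specProj_le hA (P := (· ≤ m)) (c := c) (r := (m - c) ^ 2)
      (fun x hx => by nlinarith) ψ
    nlinarith [hm.1, sq_nonneg (m - c)]

end SpectralProjector

theorem IsGappedGround.mul_norm_sub_sq_le {N d : ℕ} {H A : SpinOp N d} {Ω : SpinSpace N d}
    {δE : ℝ} (hG : IsGappedGround H Ω δE) (hH : IsSelfAdjoint H) (hA : IsSelfAdjoint A) :
    δE * ‖A Ω - ((⟪Ω, A Ω⟫_ℂ).re : ℂ) • Ω‖ ^ 2 ≤ ‖⁅A, ⁅A, H⁆⁆‖ / 2 := by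
  obtain ⟨hnorm, hHΩ, -, hgap⟩ := hG
  rw [show ((⟪Ω, A Ω⟫_ℂ).re : ℂ) = ⟪Ω, A Ω⟫_ℂ from hA.isSymmetric.coe_re_inner_self_apply Ω]
  set φ := A Ω - ⟪Ω, A Ω⟫_ℂ • Ω
  have horth : ⟪Ω, φ⟫_ℂ = 0 := by
    simp [φ, inner_self_eq_norm_sq_to_K, hnorm]
  have henergy : ⟪φ, H φ⟫_ℂ = ⟪A Ω, H (A Ω)⟫_ℂ := by
    simp [φ, hHΩ, hH.inner_apply_eq_zero_of_apply_eq_zero hHΩ]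
  have hdouble : -(⟪Ω, ⁅A, ⁅A, H⁆⁆ Ω⟫_ℂ).re ≤ ‖⁅A, ⁅A, H⁆⁆‖ :=
    calc -(⟪Ω, ⁅A, ⁅A, H⁆⁆ Ω⟫_ℂ).re ≤ ‖⟪Ω, ⁅A, ⁅A, H⁆⁆ Ω⟫_ℂ‖ :=
          (neg_le_abs _).trans (Complex.abs_re_le_norm _)
      _ ≤ ‖Ω‖ * (‖⁅A, ⁅A, H⁆⁆‖ * ‖Ω‖) :=
          (norm_inner_le_norm _ _).trans (by gcongr; exact ContinuousLinearMap.le_opNorm _ _)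
      _ = ‖⁅A, ⁅A, H⁆⁆‖ := by rw [hnorm]; ring
  rw [inner_lie_lie_apply_of_apply_eq_zero hA hH hHΩ, ← henergy] at hdouble
  have := hgap φ horth
  simp only [Complex.mul_re, Complex.neg_re, Complex.neg_im, Complex.re_ofNat, Complex.im_ofNat]
    at hdouble
  linarith

theorem ground_state_mean_median_distance_general
    (g : ℝ) (k : ℕ) :
    ∃ C : ℝ, ∀ (N d : ℕ) (H : SpinOp N d) (δE : ℝ),
      IsKLocalHamiltonian k g H → 0 < δE →
      ∀ Ω : SpinSpace N d, IsGappedGround H Ω δE →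
      ∀ L : Finset (Fin N), δE ≤ g * L.card →
      ∀ (a : Fin N → SpinOp N d) (A : SpinOp N d), IsAdditiveOn L a A →
      ∀ m : ℝ, IsMedian A Ω m →
        |(inner ℂ Ω (A Ω) : ℂ).re - m| ≤ C * Real.sqrt (L.card / δE) := by
  refine ⟨√(4 * k * g), fun N d H δE hH hδE Ω hG L _ a A hA m hm => ?_⟩
  set c := (⟪Ω, A Ω⟫_ℂ).re
  have hvariance := hG.mul_norm_sub_sq_le hH.isSelfAdjoint hA.isSelfAdjoint
  have hdouble := hH.norm_lie_lie_le hA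
  have hmedian := hm.sq_sub_le hA.isSelfAdjoint c
  have hsq : (c - m) ^ 2 ≤ 4 * k * g * (#L / δE) := by
    rw [← mul_div_assoc, le_div_iff₀ hδE]
    nlinarith
  calc |c - m| = √((c - m) ^ 2) := (Real.sqrt_sq_eq_abs _).symm
    _ ≤ √(4 * k * g * (#L / δE)) := Real.sqrt_le_sqrt hsq
    _ = √(4 * k * g) * √(#L / δE) := Real.sqrt_mul' _ (by positivity)

theorem ground_state_mean_median_distance
    (g : ℝ) (k : ℕ) (hg : 0 < g) (hk : 0 < k) :
    ∃ C : ℝ, ∀ (N d : ℕ) (H : SpinOp N d) (δE : ℝ),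
      IsKLocalHamiltonian k g H → 0 < δE →
      ∀ Ω : SpinSpace N d, IsGappedGround H Ω δE →
      ∀ L : Finset (Fin N), δE ≤ g * L.card →
      ∀ (a : Fin N → SpinOp N d) (A : SpinOp N d), IsAdditiveOn L a A →
      ∀ m : ℝ, IsMedian A Ω m →
        |(inner ℂ Ω (A Ω) : ℂ).re - m| ≤ C * Real.sqrt (L.card / δE) :=
  ground_state_mean_median_distance_general g k
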